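/- Truth Lemma for the canonical model of F_[→]: for every F_[→]-theory Γ (a world of the canonical model) and every L_[→]-formula C, Γ ⊩ C in the canonical model if and only if C ∈ Γ. -/
import Mathlib


/-- Implicational formulas: built from propositional variables using only `→`. -/
inductive Fm : Type
  | var : ℕ → Fm
  | imp : Fm → Fm → Fm

/-- `chain [A₁,…,Aₙ] E` is the formula `A₁→(A₂→(⋯→(Aₙ→E)⋯))` (and `E` when n = 0). -/
def chain : List Fm → Fm → Fm
  | [], E => E
  | A :: L, E => Fm.imp A (chain L E)

/-- Theorems of the Hilbert system `F_[→]`. -/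
inductive FThm : Fm → Prop
  | id (A : Fm) : FThm (A.imp A)
  | mp {A B : Fm} : FThm A → FThm (A.imp B) → FThm B
  | afort {A : Fm} (B : Fm) : FThm A → FThm (B.imp A)
  | rule4 {L : List Fm} {B C D : Fm} :
      FThm (chain L (B.imp C)) → FThm (chain L (C.imp D)) →
      FThm (chain L (B.imp D))

/-- `Δ` is an `F_[→]`-theory. -/
def IsTheory (Δ : Set Fm) : Prop :=
  (∀ (L : List Fm) (B C D : Fm),
      chain L (B.imp C) ∈ Δ → chain L (C.imp D) ∈ Δ → chain L (B.imp D) ∈ Δ) ∧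
  (∀ A B : Fm, FThm (A.imp B) → A ∈ Δ → B ∈ Δ) ∧
  (∀ A : Fm, FThm A → A ∈ Δ)

/-- Rooted subintuitionistic `[→]`-Kripke models. -/
structure KripkeModel where
  W : Type
  g : W
  R : W → W → Prop
  root : ∀ w : W, R g w
  V : ℕ → W → Prop

/-- Forcing in a rooted subintuitionistic `[→]`-Kripke model. -/
def Force (M : KripkeModel) : M.W → Fm → Prop
  | w, Fm.var p => M.V p w
  | w, Fm.imp A B => ∀ v : M.W, M.R w v → Force M v A → Force M v B

/-- The canonical model of `F_[→]`: worlds are the `F_[→]`-theories, the root is the set of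
theorems, `Γ R Δ` iff for all `A→B ∈ Γ`, `A ∈ Δ` implies `B ∈ Δ`, and `Γ ⊩ p` iff `p ∈ Γ`. -/
def canonicalF : KripkeModel where
  W := {Δ : Set Fm // IsTheory Δ}
  g := ⟨{A : Fm | FThm A},
    ⟨fun _ _ _ _ h1 h2 => FThm.rule4 h1 h2,
     fun _ _ hAB hA => FThm.mp hA hAB,
     fun _ hA => hA⟩⟩
  R := fun Γ Δ => ∀ A B : Fm, Fm.imp A B ∈ Γ.1 → A ∈ Δ.1 → B ∈ Δ.1
  root := fun Δ _ _ hAB hA => Δ.2.2.1 _ _ hAB hA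
  V := fun p Γ => Fm.var p ∈ Γ.1

/-- Truth Lemma for the canonical model of `F_[→]`: a world (theory) `Γ` forces `C`
iff `C ∈ Γ`. -/
theorem truth_lemma_F (Γ : canonicalF.W) (C : Fm) :
    Force canonicalF Γ C ↔ C ∈ Γ.1 := by
  induction C generalizing Γ with
  | var p => exact Iff.rfl
  | imp A B ihA ihB =>
    constructor
    · intro hF
      set Δ : Set Fm := {D | Fm.imp A D ∈ Γ.1} ∪ {A} with hΔdef
      have hmem : ∀ D, D ∈ Δ → Fm.imp A D ∈ Γ.1 := by
        intro D hD
        rcases hD with h | h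
        · exact h
        · cases h; exact Γ.2.2.2 _ (FThm.id A)
      have hth : IsTheory Δ := by
        refine ⟨?_, ?_, ?_⟩
        · intro L B' C' D' h1 h2
          exact Or.inl (Γ.2.1 (A :: L) B' C' D' (hmem _ h1) (hmem _ h2))
        · intro X Y hXY hX
          exact Or.inl (Γ.2.1 [] A X Y (hmem _ hX) (Γ.2.2.2 _ hXY))
        · intro X hX
          exact Or.inl (Γ.2.2.2 _ (FThm.afort A hX))
      let ΔW : canonicalF.W := ⟨Δ, hth⟩
      have hR : canonicalF.R Γ ΔW := by
        intro X Y hXY hX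
        exact Or.inl (Γ.2.1 [] A X Y (hmem _ hX) hXY)
      have hA : Force canonicalF ΔW A := (ihA ΔW).mpr (Or.inr rfl)
      have hB : B ∈ Δ := (ihB ΔW).mp (hF ΔW hR hA)
      exact hmem _ hB
    · intro h Δ hR hAf
      exact (ihB Δ).mpr (hR A B h ((ihA Δ).mp hAf))
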